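/- (Strong duality, trace case.) For every symmetric f ∈ ℝ⟨x⟩ of degree at most 2d, sup { τ ∈ ℝ : f − τ is cyclically equivalent to an element of Σ_{2d} } = inf { L(f) : L : ℝ⟨x⟩_{2d} → ℝ linear, L(p*) = L(p) for all p, L(1) = 1, L(σ) ≥ 0 for all σ ∈ Σ_{2d}, and L(pq) = L(qp) whenever p, q ∈ ℝ⟨x⟩ with deg(pq) ≤ 2d }, as an equality in the extended reals. -/

import Mathlib

open scoped Matrix

/-- `ℝ⟨x₁,…,xₙ⟩`: noncommutative polynomials with real coefficients in `n`
noncommuting letters, realized as the monoid algebra of the free monoid on `Fin n`. -/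
abbrev NCPoly (n : ℕ) : Type := MonoidAlgebra ℝ (FreeMonoid (Fin n))

/-- The canonical involution `f ↦ f⋆` on `ℝ⟨x⟩`: it fixes `ℝ` and each letter `xᵢ`
and reverses words. -/
noncomputable def ncStar {n : ℕ} (f : NCPoly n) : NCPoly n :=
  MonoidAlgebra.mapDomain FreeMonoid.reverse f

/-- `degLE f d`: the nc polynomial `f` has degree at most `d`. -/
def degLE {n : ℕ} (f : NCPoly n) (d : ℕ) : Prop :=
  ∀ w ∈ f.coeff.support, FreeMonoid.length w ≤ d

/-- The `i`-th letter `xᵢ` as an nc polynomial. -/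
noncomputable def ncX {n : ℕ} (i : Fin n) : NCPoly n :=
  MonoidAlgebra.of ℝ (FreeMonoid (Fin n)) (FreeMonoid.of i)

/-- A word `w` viewed as an nc polynomial (the monomial `w` with coefficient `1`). -/
noncomputable def ncWord {n : ℕ} (w : FreeMonoid (Fin n)) : NCPoly n :=
  MonoidAlgebra.of ℝ (FreeMonoid (Fin n)) w

/-- Evaluation of an nc polynomial at a tuple `A = (A₁,…,Aₙ)` of square matrices:
the algebra homomorphism `ℝ⟨x⟩ → ℝ^{r×r}` sending `xᵢ` to `Aᵢ`. -/
noncomputable def ncEval {n r : ℕ} (A : Fin n → Matrix (Fin r) (Fin r) ℝ) :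
    NCPoly n →ₐ[ℝ] Matrix (Fin r) (Fin r) ℝ :=
  MonoidAlgebra.lift (R := ℝ) (M := FreeMonoid (Fin n)) (A := _) (FreeMonoid.lift A)

/-- The cone `Σ` of sums of Hermitian squares `Σᵢ gᵢ⋆ gᵢ`. -/
def SOHS (n : ℕ) : Set (NCPoly n) :=
  { f | ∃ (k : ℕ) (g : Fin k → NCPoly n), f = ∑ i, ncStar (g i) * g i }

/-- The truncated cone `Σ_{2d}`: sums of Hermitian squares `Σᵢ gᵢ⋆ gᵢ` with `deg gᵢ ≤ d`. -/
def SOHSdeg (n d : ℕ) : Set (NCPoly n) :=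
  { f | ∃ (k : ℕ) (g : Fin k → NCPoly n), (∀ i, degLE (g i) d) ∧ f = ∑ i, ncStar (g i) * g i }

/-- `f ∼cyc g`: `f - g` is a finite sum of commutators. -/
def cycEq {n : ℕ} (f g : NCPoly n) : Prop :=
  ∃ (k : ℕ) (p q : Fin k → NCPoly n), f - g = ∑ i, (p i * q i - q i * p i)

/-- `Θ`: nc polynomials cyclically equivalent to a sum of Hermitian squares. -/
def Theta (n : ℕ) : Set (NCPoly n) :=
  { f | ∃ σ ∈ SOHS n, cycEq f σ }

/-- The quadratic module `Q(𝔤)` generated by a finite set `G` of nc polynomials: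
all finite sums `Σᵢ pᵢ⋆ gᵢ pᵢ` with `gᵢ ∈ G ∪ {1}`. -/
def QModule {n : ℕ} (G : Finset (NCPoly n)) : Set (NCPoly n) :=
  { f | ∃ (k : ℕ) (g p : Fin k → NCPoly n),
      (∀ i, g i ∈ (G : Set (NCPoly n)) ∪ {1}) ∧ f = ∑ i, ncStar (p i) * g i * p i }

/-- Words of degree (length) at most `d` in `n` letters. -/
def WordLE (n d : ℕ) : Type := { w : FreeMonoid (Fin n) // FreeMonoid.length w ≤ d }

noncomputable instance (n d : ℕ) : Fintype (WordLE n d) := by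
  have h : {l : List (Fin n) | l.length ≤ d}.Finite := List.finite_length_le (Fin n) d
  have : Finite (WordLE n d) := h.to_subtype
  exact Fintype.ofFinite _

instance (n d : ℕ) : DecidableEq (WordLE n d) := by
  unfold WordLE FreeMonoid; exact inferInstance

/-!
Weak duality: if `f - τ ∼cyc σ` with `σ ∈ Σ_{2d}`, then `f - τ` and `σ` have the same cyclic normal
form (every word replaced by a fixed representative of its rotation class), and a functional that
is tracial in degree `≤ 2d` takes the same value on a polynomial of degree `≤ 2d` and on its normal
form; hence `L f - τ = L σ ≥ 0`.

Strong duality: `Σ_{2d}` is the image of the cone of positive semidefinite Gram matrices under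
`G ↦ ∑ G u v • u⋆v`. In the coordinates of cyclic normal forms of degree `≤ 2d`, the image of that
cone is a closed convex cone: in finite dimension a linear image of a closed cone is closed as soon
as no nonzero point of the cone is killed, and here the trace of the evaluation at the shifts of
the truncated Fock space is tracial and faithful on Gram matrices. If `τ` is infeasible, Farkas'
lemma separates `f - τ` from this cone; symmetrising the separating functional, adding a small
multiple of the Fock trace (so that `L 1 > 0`) and normalising gives an admissible `L` with
`L f < τ`.
-/

namespace PointedCone

variable {P E : Type*} [NormedAddCommGroup P] [NormedSpace ℝ P] [FiniteDimensional ℝ P]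
  [NormedAddCommGroup E] [NormedSpace ℝ E] {C : PointedCone ℝ P} {β : P →ₗ[ℝ] E}

lemma exists_pos_mul_norm_le_norm_map (hC : IsClosed (C : Set P))
    (hβ : ∀ x ∈ C, β x = 0 → x = 0) : ∃ m > 0, ∀ x ∈ C, m * ‖x‖ ≤ ‖β x‖ := by
  set S := (C : Set P) ∩ Metric.sphere (0 : P) 1
  have hS : IsCompact (β '' S) :=
    ((isCompact_sphere 0 1).inter_left hC).image β.continuous_of_finiteDimensional
  have h0 : (0 : E) ∉ β '' S := by
    rintro ⟨x, ⟨hxC, hx1⟩, hx0⟩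
    simp [hβ x hxC hx0] at hx1
  obtain ⟨m, hm, hball⟩ := Metric.mem_nhds_iff.1 (hS.isClosed.isOpen_compl.mem_nhds h0)
  refine ⟨m, hm, fun x hx => ?_⟩
  rcases eq_or_ne x 0 with rfl | hx0
  · simp
  have hxS : ‖x‖⁻¹ • x ∈ S :=
    ⟨C.smul_mem (inv_nonneg.2 (norm_nonneg x)) hx, by simp [norm_smul, hx0]⟩
  have hmx : m ≤ ‖β (‖x‖⁻¹ • x)‖ :=
    not_lt.1 fun h => hball (mem_ball_zero_iff.2 h) ⟨_, hxS, rfl⟩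
  rwa [map_smul, norm_smul, norm_inv, norm_norm, le_inv_mul_iff₀ (norm_pos_iff.2 hx0),
    mul_comm] at hmx

theorem isClosed_map (hC : IsClosed (C : Set P)) (hβ : ∀ x ∈ C, β x = 0 → x = 0) :
    IsClosed (C.map β : Set E) := by
  obtain ⟨m, hm, hcoer⟩ := exists_pos_mul_norm_le_norm_map hC hβ
  refine isClosed_of_closure_subset fun y hy => ?_
  set R := (‖y‖ + 1) / m
  have hK : IsCompact (β '' (C ∩ Metric.closedBall 0 R)) :=
    ((isCompact_closedBall 0 R).inter_left hC).image β.continuous_of_finiteDimensional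
  have hsub : Metric.ball y 1 ∩ (C.map β : Set E) ⊆ β '' (C ∩ Metric.closedBall 0 R) := by
    rintro _ ⟨hxy, x, hx, rfl⟩
    refine ⟨x, ⟨hx, mem_closedBall_zero_iff.2 ?_⟩, rfl⟩
    rw [le_div_iff₀ hm, mul_comm]
    have hxy' : ‖β x - y‖ < 1 := by simpa [dist_eq_norm] using hxy
    linarith [hcoer x hx, norm_le_norm_add_norm_sub' (β x) y]
  obtain ⟨x, hx, rfl⟩ := closure_minimal hsub hK.isClosed
    (Metric.isOpen_ball.inter_closure ⟨Metric.mem_ball_self one_pos, hy⟩)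
  exact ⟨x, hx.1, rfl⟩

end PointedCone

namespace Matrix

def posSemidefCone (ι : Type*) [Fintype ι] : PointedCone ℝ (Matrix ι ι ℝ) where
  carrier := {A | A.PosSemidef}
  add_mem' := PosSemidef.add
  zero_mem' := PosSemidef.zero
  smul_mem' c _ hA := hA.smul c.2

lemma isClosed_setOf_posSemidef {ι : Type*} [Fintype ι] :
    IsClosed {A : Matrix ι ι ℝ | A.PosSemidef} := by
  simp only [posSemidef_iff_dotProduct_mulVec, IsHermitian, Set.ofPred_and, Set.ofPred_forall]
  exact (isClosed_eq (by fun_prop) continuous_id).inter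
    (isClosed_iInter fun x => isClosed_le continuous_const (by fun_prop))

end Matrix

namespace NCPoly

open MonoidAlgebra

variable {n d : ℕ}

instance {α : Type*} [DecidableEq α] : DecidableEq (FreeMonoid α) :=
  inferInstanceAs (DecidableEq (List α))

@[simp]
lemma ncStar_single (w : FreeMonoid (Fin n)) (c : ℝ) :
    ncStar (single w c : NCPoly n) = single w.reverse c :=
  mapDomain_single

noncomputable def starLinear (n : ℕ) : NCPoly n →ₗ[ℝ] NCPoly n :=
  mapDomainLinearMap ℝ ℝ FreeMonoid.reverse

@[simp]
lemma starLinear_apply (p : NCPoly n) : starLinear n p = ncStar p := rfl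

@[simp]
lemma ncStar_zero : ncStar (0 : NCPoly n) = 0 := map_zero (starLinear n)

@[simp]
lemma ncStar_add (p q : NCPoly n) : ncStar (p + q) = ncStar p + ncStar q :=
  map_add (starLinear n) p q

@[simp]
lemma ncStar_sum {ι : Type*} (s : Finset ι) (f : ι → NCPoly n) :
    ncStar (∑ i ∈ s, f i) = ∑ i ∈ s, ncStar (f i) :=
  map_sum (starLinear n) f s

@[simp]
lemma ncStar_one : ncStar (1 : NCPoly n) = 1 := ncStar_single 1 1

lemma ncStar_mul (p q : NCPoly n) : ncStar (p * q) = ncStar q * ncStar p := by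
  induction p using induction_linear with
  | zero => simp
  | add p p' hp hp' => simp [add_mul, mul_add, hp, hp']
  | single u a =>
    induction q using induction_linear with
    | zero => simp
    | add q q' hq hq' => simp [add_mul, mul_add, hq, hq']
    | single v b => simp [single_mul_single, FreeMonoid.reverse_mul, mul_comm a b]

@[simp]
lemma ncStar_ncStar (p : NCPoly n) : ncStar (ncStar p) = p := by
  induction p using induction_linear with
  | zero => simp
  | add p q hp hq => simp [hp, hq]
  | single w c => simp

def degLESubmodule (n D : ℕ) : Submodule ℝ (NCPoly n) where
  carrier := {p | degLE p D}
  add_mem' {p q} hp hq w hw := by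
    rcases Finset.mem_union.1 (Finsupp.support_add hw) with h | h
    exacts [hp w h, hq w h]
  zero_mem' w hw := by simp at hw
  smul_mem' c p hp w hw := hp w (Finsupp.support_smul hw)

lemma mem_degLESubmodule {p : NCPoly n} {D : ℕ} : p ∈ degLESubmodule n D ↔ degLE p D := by rfl

lemma degLE_single {w : FreeMonoid (Fin n)} {D : ℕ} (h : w.length ≤ D) (c : ℝ) :
    degLE (single w c : NCPoly n) D := by
  intro w' hw'
  rw [Finset.mem_singleton.1 (Finsupp.support_single_subset hw')]
  exact h

lemma degLE_one (D : ℕ) : degLE (1 : NCPoly n) D :=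
  degLE_single (Nat.zero_le D) 1

lemma degLE_zero (D : ℕ) : degLE (0 : NCPoly n) D := (degLESubmodule n D).zero_mem

lemma degLE_sub_smul_one {f : NCPoly n} {D : ℕ} (hf : degLE f D) (τ : ℝ) : degLE (f - τ • 1) D :=
  (degLESubmodule n D).sub_mem hf ((degLESubmodule n D).smul_mem τ (degLE_one D))

noncomputable def cycRep (w : FreeMonoid (Fin n)) : FreeMonoid (Fin n) :=
  FreeMonoid.ofList (Quotient.out (w.toList : Cycle (Fin n)))

lemma cycRep_mul_comm (u v : FreeMonoid (Fin n)) : cycRep (u * v) = cycRep (v * u) := by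
  unfold cycRep
  rw [FreeMonoid.toList_mul, FreeMonoid.toList_mul, Cycle.coe_eq_coe.2 List.isRotated_append]

lemma exists_mul_eq_cycRep (w : FreeMonoid (Fin n)) :
    ∃ u v : FreeMonoid (Fin n), u * v = w ∧ v * u = cycRep w := by
  obtain ⟨k, hk⟩ : w.toList ~r (Quotient.out (w.toList : Cycle (Fin n))) :=
    (Quotient.mk_out (s := List.IsRotated.setoid _) w.toList).symm
  refine ⟨.ofList (w.toList.take (k % w.toList.length)),
    .ofList (w.toList.drop (k % w.toList.length)), ?_, ?_⟩
  · simp [← FreeMonoid.ofList_append]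
  · rw [← FreeMonoid.ofList_append, ← List.rotate_eq_drop_append_take_mod, hk]
    rfl

noncomputable def cycNF (n : ℕ) : NCPoly n →ₗ[ℝ] NCPoly n :=
  mapDomainLinearMap ℝ ℝ cycRep

@[simp]
lemma cycNF_single (w : FreeMonoid (Fin n)) (c : ℝ) : cycNF n (single w c) = single (cycRep w) c :=
  mapDomainLinearMap_single _ _ _

lemma cycNF_mul_comm (p q : NCPoly n) : cycNF n (p * q) = cycNF n (q * p) := by
  induction p using induction_linear with
  | zero => simp
  | add p p' hp hp' => simp only [add_mul, mul_add, map_add, hp, hp']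
  | single u a =>
    induction q using induction_linear with
    | zero => simp
    | add q q' hq hq' => simp only [add_mul, mul_add, map_add, hq, hq']
    | single v b => simp [single_mul_single, cycRep_mul_comm u v, mul_comm a b]

lemma degLE_cycNF {p : NCPoly n} {D : ℕ} (hp : degLE p D) : degLE (cycNF n p) D := by
  intro w hw
  obtain ⟨u, hu, rfl⟩ := Finset.mem_image.1 (Finsupp.mapDomain_support hw)
  obtain ⟨a, b, hab, hba⟩ := exists_mul_eq_cycRep u
  rw [← hba, FreeMonoid.length_mul, add_comm, ← FreeMonoid.length_mul, hab]
  exact hp u hu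

lemma sub_cycNF_mem_span_commutators (x : NCPoly n) :
    x - cycNF n x ∈ Submodule.span ℝ {c | ∃ p q : NCPoly n, c = p * q - q * p} := by
  induction x using induction_linear with
  | zero => simp
  | add x y hx hy =>
    rw [map_add, add_sub_add_comm]
    exact add_mem hx hy
  | single w c =>
    obtain ⟨u, v, rfl, hvu⟩ := exists_mul_eq_cycRep w
    refine Submodule.subset_span ⟨single u c, single v 1, ?_⟩
    simp [single_mul_single, ← hvu]

theorem cycEq_iff_cycNF_eq {f g : NCPoly n} : cycEq f g ↔ cycNF n f = cycNF n g := by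
  constructor
  · rintro ⟨k, p, q, h⟩
    rw [← sub_eq_zero, ← map_sub, h, map_sum]
    simp [cycNF_mul_comm]
  · intro h
    have hmem := sub_cycNF_mem_span_commutators (f - g)
    rw [map_sub, h, sub_self, sub_zero] at hmem
    obtain ⟨k, c, x, hx⟩ := Submodule.mem_span_set'.1 hmem
    choose p q hpq using fun i => (x i).2
    refine ⟨k, fun i => c i • p i, q, ?_⟩
    simp only [← hx, hpq, smul_sub, smul_mul_assoc, mul_smul_comm]

lemma map_cycNF_of_tracial (L : NCPoly n →ₗ[ℝ] ℝ) {D : ℕ}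
    (hL : ∀ p q : NCPoly n, degLE (p * q) D → L (p * q) = L (q * p)) {x : NCPoly n}
    (hx : degLE x D) : L (cycNF n x) = L x := by
  rw [← sum_coeff_single x, Finsupp.sum, map_sum, map_sum, map_sum]
  refine Finset.sum_congr rfl fun w hw => ?_
  obtain ⟨u, v, rfl, hvu⟩ := exists_mul_eq_cycRep w
  have hdeg : degLE (single u (x.coeff (u * v)) * single v 1) D := by
    rw [single_mul_single, mul_one]
    exact degLE_single (hx _ hw) _
  rw [cycNF_single, ← hvu]
  have h1 := hL _ _ hdeg
  simp only [single_mul_single, mul_one, one_mul] at h1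
  exact h1.symm

noncomputable def coeffsLE (n D : ℕ) : NCPoly n →ₗ[ℝ] (WordLE n D → ℝ) where
  toFun p w := p.coeff w.1
  map_add' _ _ := rfl
  map_smul' _ _ := rfl

noncomputable def ofCoeffs (n D : ℕ) : (WordLE n D → ℝ) →ₗ[ℝ] NCPoly n :=
  Fintype.linearCombination ℝ fun w => ncWord w.1

lemma ofCoeffs_apply {D : ℕ} (c : WordLE n D → ℝ) : ofCoeffs n D c = ∑ w, single w.1 (c w) := by
  simp [ofCoeffs, Fintype.linearCombination_apply, ncWord, smul_single]

lemma coeff_ofCoeffs {D : ℕ} (c : WordLE n D → ℝ) (w : FreeMonoid (Fin n)) :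
    (ofCoeffs n D c).coeff w = if h : w.length ≤ D then c ⟨w, h⟩ else 0 := by
  rw [ofCoeffs_apply, coeff_sum, Finset.sum_apply']
  split_ifs with h
  · rw [Fintype.sum_eq_single ⟨w, h⟩ fun u hu => ?_]
    · simp
    · exact Finsupp.single_eq_of_ne (fun h' => hu (Subtype.ext h'.symm))
  · exact Finset.sum_eq_zero fun u _ =>
      Finsupp.single_eq_of_ne (fun h' => h (h' ▸ u.2))

@[simp]
lemma coeffsLE_ofCoeffs {D : ℕ} (c : WordLE n D → ℝ) : coeffsLE n D (ofCoeffs n D c) = c := by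
  funext w
  exact (coeff_ofCoeffs c w.1).trans (dif_pos w.2)

lemma ofCoeffs_coeffsLE {D : ℕ} {p : NCPoly n} (hp : degLE p D) :
    ofCoeffs n D (coeffsLE n D p) = p := by
  ext w
  rw [coeff_ofCoeffs]
  split_ifs with h
  · rfl
  · by_contra hw
    exact h (hp w (Finsupp.mem_support_iff.2 (Ne.symm hw)))

lemma eq_of_coeffsLE_eq {D : ℕ} {p q : NCPoly n} (hp : degLE p D) (hq : degLE q D)
    (h : coeffsLE n D p = coeffsLE n D q) : p = q := by
  rw [← ofCoeffs_coeffsLE hp, h, ofCoeffs_coeffsLE hq]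

lemma degLE_ofCoeffs {D : ℕ} (c : WordLE n D → ℝ) : degLE (ofCoeffs n D c) D := by
  rw [← mem_degLESubmodule, ofCoeffs_apply]
  exact Submodule.sum_mem _ fun w _ => degLE_single w.2 _

noncomputable def gram (n d : ℕ) : Matrix (WordLE n d) (WordLE n d) ℝ →ₗ[ℝ] NCPoly n where
  toFun G := ∑ u, ∑ v, single (u.1.reverse * v.1) (G u v)
  map_add' G H := by simp only [Matrix.add_apply, single_add, Finset.sum_add_distrib]
  map_smul' c G := by simp only [Matrix.smul_apply, smul_eq_mul, ← smul_single', Finset.smul_sum,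
    RingHom.id_apply]

lemma gram_apply (G : Matrix (WordLE n d) (WordLE n d) ℝ) :
    gram n d G = ∑ u, ∑ v, single (u.1.reverse * v.1) (G u v) := rfl

lemma degLE_gram (G : Matrix (WordLE n d) (WordLE n d) ℝ) : degLE (gram n d G) (2 * d) := by
  rw [← mem_degLESubmodule, gram_apply]
  refine Submodule.sum_mem _ fun u _ => Submodule.sum_mem _ fun v _ => degLE_single ?_ _
  rw [FreeMonoid.length_mul, FreeMonoid.length_reverse, two_mul]
  exact add_le_add u.2 v.2

lemma gram_vecMulVec (c : WordLE n d → ℝ) :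
    gram n d (Matrix.vecMulVec c c) = ncStar (ofCoeffs n d c) * ofCoeffs n d c := by
  simp only [gram_apply, ofCoeffs_apply, Matrix.vecMulVec_apply, ncStar_sum, ncStar_single,
    Finset.sum_mul_sum, single_mul_single]

theorem mem_SOHSdeg_iff {σ : NCPoly n} :
    σ ∈ SOHSdeg n d ↔ ∃ G : Matrix (WordLE n d) (WordLE n d) ℝ, G.PosSemidef ∧ gram n d G = σ := by
  constructor
  · rintro ⟨k, g, hg, rfl⟩
    refine ⟨∑ i, Matrix.vecMulVec (coeffsLE n d (g i)) (coeffsLE n d (g i)),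
      Matrix.posSemidef_sum _ fun i _ => Matrix.posSemidef_vecMulVec_self_star _, ?_⟩
    simp only [map_sum, gram_vecMulVec, ofCoeffs_coeffsLE (hg _)]
  · rintro ⟨G, hG, rfl⟩
    obtain ⟨k, v, rfl⟩ := Matrix.posSemidef_iff_eq_sum_vecMulVec.1 hG
    refine ⟨k, fun i => ofCoeffs n d (v i), fun i => degLE_ofCoeffs _, ?_⟩
    simp only [map_sum, star_trivial, gram_vecMulVec]

lemma degLE_of_mem_SOHSdeg {σ : NCPoly n} (hσ : σ ∈ SOHSdeg n d) : degLE σ (2 * d) := by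
  obtain ⟨G, -, rfl⟩ := mem_SOHSdeg_iff.1 hσ
  exact degLE_gram G

lemma ncStar_of_mem_SOHSdeg {σ : NCPoly n} (hσ : σ ∈ SOHSdeg n d) : ncStar σ = σ := by
  obtain ⟨k, g, -, rfl⟩ := hσ
  simp only [ncStar_sum, ncStar_mul, ncStar_ncStar]

section Evaluation

variable {ι : Type*} [Fintype ι] [DecidableEq ι]

noncomputable def evalAt (X : Fin n → Matrix ι ι ℝ) : NCPoly n →ₐ[ℝ] Matrix ι ι ℝ :=
  lift ℝ (Matrix ι ι ℝ) (FreeMonoid (Fin n)) (FreeMonoid.lift X)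

lemma evalAt_single (X : Fin n → Matrix ι ι ℝ) (w : FreeMonoid (Fin n)) (c : ℝ) :
    evalAt X (single w c) = c • FreeMonoid.lift X w :=
  lift_single _ _ _

lemma lift_reverse_of_isHermitian {X : Fin n → Matrix ι ι ℝ} (hX : ∀ i, (X i).IsHermitian)
    (w : FreeMonoid (Fin n)) : FreeMonoid.lift X w.reverse = (FreeMonoid.lift X w)ᴴ := by
  induction w using FreeMonoid.inductionOn' with
  | one => exact (map_one _).trans (by simp)
  | of_mul i w ih =>
    rw [FreeMonoid.reverse_mul, map_mul, map_mul, ih, Matrix.conjTranspose_mul,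
      FreeMonoid.reverse_of, FreeMonoid.lift_eval_of, (hX i).eq]

lemma evalAt_ncStar {X : Fin n → Matrix ι ι ℝ} (hX : ∀ i, (X i).IsHermitian) (p : NCPoly n) :
    evalAt X (ncStar p) = (evalAt X p)ᴴ := by
  induction p using induction_linear with
  | zero => simp
  | add p q hp hq => simp [hp, hq]
  | single w c => simp [evalAt_single, lift_reverse_of_isHermitian hX]

noncomputable def traceAt (X : Fin n → Matrix ι ι ℝ) : NCPoly n →ₗ[ℝ] ℝ :=
  Matrix.traceLinearMap ι ℝ ℝ ∘ₗ (evalAt X).toLinearMap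

lemma traceAt_apply (X : Fin n → Matrix ι ι ℝ) (p : NCPoly n) :
    traceAt X p = (evalAt X p).trace := rfl

lemma traceAt_mul_comm (X : Fin n → Matrix ι ι ℝ) (p q : NCPoly n) :
    traceAt X (p * q) = traceAt X (q * p) := by
  rw [traceAt_apply, traceAt_apply, map_mul, map_mul, Matrix.trace_mul_comm]

lemma traceAt_ncStar {X : Fin n → Matrix ι ι ℝ} (hX : ∀ i, (X i).IsHermitian) (p : NCPoly n) :
    traceAt X (ncStar p) = traceAt X p := by
  rw [traceAt_apply, traceAt_apply, evalAt_ncStar hX, Matrix.trace_conjTranspose, star_trivial]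

lemma traceAt_ncStar_mul_self {X : Fin n → Matrix ι ι ℝ} (hX : ∀ i, (X i).IsHermitian)
    (g : NCPoly n) : traceAt X (ncStar g * g) = ((evalAt X g)ᴴ * evalAt X g).trace := by
  rw [traceAt_apply, map_mul, evalAt_ncStar hX]

lemma traceAt_ncStar_mul_self_nonneg {X : Fin n → Matrix ι ι ℝ} (hX : ∀ i, (X i).IsHermitian)
    (g : NCPoly n) : 0 ≤ traceAt X (ncStar g * g) := by
  rw [traceAt_ncStar_mul_self hX]
  exact (Matrix.posSemidef_conjTranspose_mul_self _).trace_nonneg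

lemma traceAt_one (X : Fin n → Matrix ι ι ℝ) : traceAt X 1 = Fintype.card ι := by
  simp [traceAt_apply]

end Evaluation

def fockVacuum (n d : ℕ) : WordLE n d := ⟨1, Nat.zero_le d⟩

/-- `X i = S + Sᵀ` on the Fock space truncated at length `d`, where `S e_w = e_{xᵢ w}` is the
creation operator. The vacuum column of `w(X)` is `e_w` plus words shorter than `w`, which makes
evaluation at `X` faithful in degree `≤ d`. -/
noncomputable def fockShift (n d : ℕ) (i : Fin n) : Matrix (WordLE n d) (WordLE n d) ℝ :=
  Matrix.of fun a b => if a.1 = FreeMonoid.of i * b.1 ∨ b.1 = FreeMonoid.of i * a.1 then 1 else 0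

lemma fockShift_isHermitian (i : Fin n) : (fockShift n d i).IsHermitian := by
  ext a b
  simp [fockShift, or_comm]

lemma fockShift_mul_eq_ite {t : FreeMonoid (Fin n)} {v : WordLE n d → ℝ}
    (hv : ∀ w : WordLE n d, t.length ≤ w.1.length → v w = if w.1 = t then 1 else 0)
    (i : Fin n) {w : WordLE n d} (hw : t.length < w.1.length) (b : WordLE n d) :
    fockShift n d i w b * v b = if w.1 = FreeMonoid.of i * b.1 ∧ b.1 = t then 1 else 0 := by
  by_cases h₁ : w.1 = FreeMonoid.of i * b.1
  · have hb : t.length ≤ b.1.length := by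
      rw [h₁, FreeMonoid.length_mul, FreeMonoid.length_of] at hw
      omega
    rw [hv b hb, fockShift, Matrix.of_apply, if_pos (Or.inl h₁), one_mul]
    simp only [h₁, true_and]
  have hne : ¬(w.1 = FreeMonoid.of i * b.1 ∧ b.1 = t) := fun h => h₁ h.1
  by_cases h₂ : b.1 = FreeMonoid.of i * w.1
  · have hb : t.length < b.1.length := by
      rw [h₂, FreeMonoid.length_mul, FreeMonoid.length_of]
      omega
    rw [hv b hb.le, if_neg (fun h : b.1 = t => hb.ne (h ▸ rfl)), mul_zero, if_neg hne]
  · rw [fockShift, Matrix.of_apply, if_neg (not_or.2 ⟨h₁, h₂⟩), zero_mul, if_neg hne]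

lemma sum_fockShift_mul {t : FreeMonoid (Fin n)} {v : WordLE n d → ℝ}
    (hv : ∀ w : WordLE n d, t.length ≤ w.1.length → v w = if w.1 = t then 1 else 0)
    (i : Fin n) (w : WordLE n d) (hw : (FreeMonoid.of i * t).length ≤ w.1.length) :
    ∑ b, fockShift n d i w b * v b = if w.1 = FreeMonoid.of i * t then 1 else 0 := by
  have hlt : t.length < w.1.length := by
    rw [FreeMonoid.length_mul, FreeMonoid.length_of] at hw
    omega
  simp only [fockShift_mul_eq_ite hv i hlt]
  split_ifs with h
  · have ht : t.length ≤ d := hlt.le.trans w.2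
    rw [Fintype.sum_eq_single (α := WordLE n d) ⟨t, ht⟩ fun b hb =>
      if_neg (by rintro ⟨-, hbt⟩; exact hb (Subtype.ext hbt))]
    simp [h]
  · exact Finset.sum_eq_zero fun b _ => if_neg (by rintro ⟨hwb, rfl⟩; exact h hwb)

lemma evalAt_fockShift_single_one_apply (t : FreeMonoid (Fin n)) (w : WordLE n d)
    (hw : t.length ≤ w.1.length) :
    evalAt (fockShift n d) (single t 1) w (fockVacuum n d) = if w.1 = t then 1 else 0 := by
  induction t using FreeMonoid.inductionOn' generalizing w with
  | one =>
    rw [evalAt_single, map_one, one_smul, Matrix.one_apply]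
    exact if_congr Subtype.ext_iff rfl rfl
  | of_mul i t ih =>
    rw [← mul_one (1 : ℝ), ← single_mul_single, map_mul, Matrix.mul_apply]
    simp only [evalAt_single, one_smul, mul_one, FreeMonoid.lift_eval_of] at ih ⊢
    exact sum_fockShift_mul ih i w hw

lemma evalAt_fockShift_ne_zero {p : NCPoly n} (hp : degLE p d) (hp0 : p ≠ 0) :
    evalAt (fockShift n d) p ≠ 0 := by
  obtain ⟨w₀, hw₀, hmax⟩ := Finset.exists_max_image p.coeff.support FreeMonoid.length
    (Finsupp.support_nonempty_iff.2 (coeff_eq_zero.not.2 hp0))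
  intro h
  let w₀' : WordLE n d := ⟨w₀, hp w₀ hw₀⟩
  have hentry := congrFun (congrFun h w₀') (fockVacuum n d)
  rw [← sum_coeff_single p, Finsupp.sum, map_sum, Matrix.sum_apply,
    Finset.sum_eq_single_of_mem w₀ hw₀ fun w hw hne => ?_] at hentry
  · rw [← mul_one (p.coeff w₀), ← smul_eq_mul, ← smul_single, map_smul, Matrix.smul_apply,
      evalAt_fockShift_single_one_apply w₀ w₀' le_rfl, if_pos rfl, smul_eq_mul, mul_one,
      Matrix.zero_apply] at hentry
    exact Finsupp.mem_support_iff.1 hw₀ hentry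
  · rw [← mul_one (p.coeff w), ← smul_eq_mul, ← smul_single, map_smul, Matrix.smul_apply,
      evalAt_fockShift_single_one_apply w w₀' (hmax w hw), if_neg (Ne.symm hne), smul_zero]

theorem eq_zero_of_traceAt_fockShift_gram {G : Matrix (WordLE n d) (WordLE n d) ℝ}
    (hG : G.PosSemidef) (h : traceAt (fockShift n d) (gram n d G) = 0) : G = 0 := by
  obtain ⟨k, v, rfl⟩ := Matrix.posSemidef_iff_eq_sum_vecMulVec.1 hG
  simp only [star_trivial, map_sum, gram_vecMulVec] at h ⊢
  have hX := fockShift_isHermitian (n := n) (d := d)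
  have hv : ∀ i, v i = 0 := by
    intro i
    have hi := (Finset.sum_eq_zero_iff_of_nonneg fun j _ =>
      traceAt_ncStar_mul_self_nonneg hX _).1 h i (Finset.mem_univ i)
    rw [traceAt_ncStar_mul_self hX, Matrix.trace_conjTranspose_mul_self_eq_zero_iff] at hi
    have hg : ofCoeffs n d (v i) = 0 := by
      by_contra hne
      exact evalAt_fockShift_ne_zero (degLE_ofCoeffs _) hne hi
    rw [← coeffsLE_ofCoeffs (v i), hg, map_zero]
  simp [hv]

noncomputable def cycGramMap (n d : ℕ) :
    Matrix (WordLE n d) (WordLE n d) ℝ →ₗ[ℝ] (WordLE n (2 * d) → ℝ) :=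
  coeffsLE n (2 * d) ∘ₗ cycNF n ∘ₗ gram n d

lemma eq_zero_of_cycGramMap_eq_zero {G : Matrix (WordLE n d) (WordLE n d) ℝ}
    (hG : G.PosSemidef) (h : cycGramMap n d G = 0) : G = 0 := by
  have hcyc : cycNF n (gram n d G) = 0 :=
    eq_of_coeffsLE_eq (degLE_cycNF (degLE_gram G)) (degLE_zero _) (h.trans (map_zero _).symm)
  refine eq_zero_of_traceAt_fockShift_gram hG ?_
  rw [← map_cycNF_of_tracial _ (fun p q _ => traceAt_mul_comm _ p q) (degLE_gram G), hcyc,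
    map_zero]

noncomputable def cycGramCone (n d : ℕ) : ProperCone ℝ (WordLE n (2 * d) → ℝ) where
  toSubmodule := (Matrix.posSemidefCone _).map (cycGramMap n d)
  isClosed' := by
    let _ := Matrix.normedAddCommGroup (m := WordLE n d) (n := WordLE n d) (α := ℝ)
    let _ := Matrix.normedSpace (R := ℝ) (m := WordLE n d) (n := WordLE n d) (α := ℝ)
    exact PointedCone.isClosed_map Matrix.isClosed_setOf_posSemidef
      fun G hG => eq_zero_of_cycGramMap_eq_zero hG

lemma exists_cycEq_of_mem_cycGramCone {x : NCPoly n} (hx : degLE x (2 * d))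
    (h : coeffsLE n (2 * d) (cycNF n x) ∈ cycGramCone n d) : ∃ σ ∈ SOHSdeg n d, cycEq x σ := by
  obtain ⟨G, hG, hGx⟩ := h
  exact ⟨gram n d G, mem_SOHSdeg_iff.2 ⟨G, hG, rfl⟩, cycEq_iff_cycNF_eq.2
    (eq_of_coeffsLE_eq (degLE_cycNF hx) (degLE_cycNF (degLE_gram G)) hGx.symm)⟩

structure IsTracialPositive (L : NCPoly n →ₗ[ℝ] ℝ) (d : ℕ) : Prop where
  map_ncStar : ∀ p, L (ncStar p) = L p
  map_mul_comm : ∀ p q, L (p * q) = L (q * p)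
  nonneg : ∀ σ ∈ SOHSdeg n d, 0 ≤ L σ

lemma IsTracialPositive.add {L L' : NCPoly n →ₗ[ℝ] ℝ} (hL : IsTracialPositive L d)
    (hL' : IsTracialPositive L' d) : IsTracialPositive (L + L') d where
  map_ncStar p := by simp [hL.map_ncStar, hL'.map_ncStar]
  map_mul_comm p q := by simp [hL.map_mul_comm p q, hL'.map_mul_comm p q]
  nonneg σ hσ := add_nonneg (hL.nonneg σ hσ) (hL'.nonneg σ hσ)

lemma IsTracialPositive.smul {L : NCPoly n →ₗ[ℝ] ℝ} (hL : IsTracialPositive L d) {c : ℝ}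
    (hc : 0 ≤ c) : IsTracialPositive (c • L) d where
  map_ncStar p := by simp [hL.map_ncStar]
  map_mul_comm p q := by simp [hL.map_mul_comm p q]
  nonneg σ hσ := mul_nonneg hc (hL.nonneg σ hσ)

lemma isTracialPositive_add_comp_starLinear {L : NCPoly n →ₗ[ℝ] ℝ}
    (hmul : ∀ p q, L (p * q) = L (q * p)) (hpos : ∀ σ ∈ SOHSdeg n d, 0 ≤ L σ) :
    IsTracialPositive (L + L ∘ₗ starLinear n) d where
  map_ncStar p := by simp [add_comm]
  map_mul_comm p q := by simp [ncStar_mul, hmul p q, hmul (ncStar p)]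
  nonneg σ hσ := by simpa [ncStar_of_mem_SOHSdeg hσ] using add_nonneg (hpos σ hσ) (hpos σ hσ)

lemma isTracialPositive_traceAt {ι : Type*} [Fintype ι] [DecidableEq ι]
    {X : Fin n → Matrix ι ι ℝ} (hX : ∀ i, (X i).IsHermitian) : IsTracialPositive (traceAt X) d where
  map_ncStar := traceAt_ncStar hX
  map_mul_comm := traceAt_mul_comm X
  nonneg := by
    rintro _ ⟨k, g, -, rfl⟩
    rw [map_sum]
    exact Finset.sum_nonneg fun i _ => traceAt_ncStar_mul_self_nonneg hX (g i)

lemma one_mem_SOHSdeg (n d : ℕ) : (1 : NCPoly n) ∈ SOHSdeg n d :=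
  ⟨1, fun _ => 1, fun _ => degLE_one d, by simp⟩

theorem exists_normalized_of_neg {L : NCPoly n →ₗ[ℝ] ℝ} (hL : IsTracialPositive L d)
    {x : NCPoly n} (hx : L x < 0) :
    ∃ L' : NCPoly n →ₗ[ℝ] ℝ, IsTracialPositive L' d ∧ L' 1 = 1 ∧ L' x < 0 := by
  set T := traceAt (fockShift n d)
  have hT : IsTracialPositive T d := isTracialPositive_traceAt fockShift_isHermitian
  have hT1 : 0 < T 1 := by
    rw [traceAt_one]
    exact_mod_cast Fintype.card_pos_iff.2 ⟨fockVacuum n d⟩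
  obtain ⟨ε, hε, hεx⟩ := exists_pos_mul_lt (neg_pos.2 hx) (T x)
  set M := L + ε • T
  have hM1 : 0 < M 1 := by
    have := hL.nonneg 1 (one_mem_SOHSdeg n d)
    simp only [M, LinearMap.add_apply, LinearMap.smul_apply, smul_eq_mul]
    positivity
  refine ⟨(M 1)⁻¹ • M, (hL.add (hT.smul hε.le)).smul (inv_nonneg.2 hM1.le), ?_, ?_⟩
  · simp [hM1.ne']
  · simp only [LinearMap.smul_apply, smul_eq_mul, M, LinearMap.add_apply]
    exact mul_neg_of_pos_of_neg (inv_pos.2 hM1) (by linarith [mul_comm ε (T x)])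

theorem le_of_exists_cycEq {L : NCPoly n →ₗ[ℝ] ℝ} (hL1 : L 1 = 1)
    (hpos : ∀ σ ∈ SOHSdeg n d, 0 ≤ L σ)
    (htr : ∀ p q : NCPoly n, degLE (p * q) (2 * d) → L (p * q) = L (q * p))
    {f : NCPoly n} (hf : degLE f (2 * d)) {τ : ℝ}
    (hτ : ∃ σ ∈ SOHSdeg n d, cycEq (f - τ • 1) σ) : τ ≤ L f := by
  obtain ⟨σ, hσ, hcyc⟩ := hτ
  have key : L (f - τ • 1) = L σ := by
    rw [← map_cycNF_of_tracial L htr (degLE_sub_smul_one hf τ), cycEq_iff_cycNF_eq.1 hcyc,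
      map_cycNF_of_tracial L htr (degLE_of_mem_SOHSdeg hσ)]
  rw [map_sub, map_smul, hL1, smul_eq_mul, mul_one] at key
  linarith [hpos σ hσ]

theorem exists_lt_of_not_exists_cycEq {f : NCPoly n} (hf : ncStar f = f) (hdeg : degLE f (2 * d))
    {τ : ℝ} (hτ : ¬∃ σ ∈ SOHSdeg n d, cycEq (f - τ • 1) σ) :
    ∃ L : NCPoly n →ₗ[ℝ] ℝ, IsTracialPositive L d ∧ L 1 = 1 ∧ L f < τ := by
  have hx := degLE_sub_smul_one hdeg τ
  obtain ⟨y, hyK, hyx⟩ := (cycGramCone n d).hyperplane_separation_point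
    fun h => hτ (exists_cycEq_of_mem_cycGramCone hx h)
  set L := y.toLinearMap ∘ₗ coeffsLE n (2 * d) ∘ₗ cycNF n
  have hL : IsTracialPositive (L + L ∘ₗ starLinear n) d := by
    refine isTracialPositive_add_comp_starLinear (fun p q => by simp [L, cycNF_mul_comm]) ?_
    intro σ hσ
    obtain ⟨G, hG, rfl⟩ := mem_SOHSdeg_iff.1 hσ
    exact hyK _ ⟨G, hG, rfl⟩
  have hxs : ncStar (f - τ • 1) = f - τ • 1 := by
    rw [← starLinear_apply, map_sub, map_smul, starLinear_apply, starLinear_apply, hf, ncStar_one]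
  have hLx : (L + L ∘ₗ starLinear n) (f - τ • 1) < 0 := by
    change L (f - τ • 1) + L (ncStar (f - τ • 1)) < 0
    rw [hxs]
    exact add_neg hyx hyx
  obtain ⟨L', hL', hL'1, hL'x⟩ := exists_normalized_of_neg hL hLx
  refine ⟨L', hL', hL'1, ?_⟩
  rw [map_sub, map_smul, hL'1, smul_eq_mul, mul_one] at hL'x
  linarith

end NCPoly

/-- **strong duality, trace case.** For symmetric `f` of degree at most
`2d`, `sup { τ : f - τ ∼cyc some element of Σ_{2d} }` equals the infimum of `L(f)` over
symmetric unital tracial linear functionals `L` on `ℝ⟨x⟩_{2d}` nonnegative on `Σ_{2d}`. -/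
theorem strong_duality_trace {n d : ℕ} (f : NCPoly n)
    (hf : ncStar f = f) (hdeg : degLE f (2 * d)) :
    sSup { x : EReal | ∃ τ : ℝ,
        (∃ σ ∈ SOHSdeg n d, cycEq (f - τ • 1) σ) ∧ x = (τ : EReal) } =
    sInf { x : EReal | ∃ L : NCPoly n →ₗ[ℝ] ℝ,
        (∀ p : NCPoly n, degLE p (2 * d) → L (ncStar p) = L p) ∧
        L 1 = 1 ∧
        (∀ σ ∈ SOHSdeg n d, 0 ≤ L σ) ∧
        (∀ p q : NCPoly n, degLE (p * q) (2 * d) → L (p * q) = L (q * p)) ∧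
        x = (L f : EReal) } := by
  apply le_antisymm
  · refine sSup_le fun _ ⟨τ, hτ, hx⟩ => le_sInf fun _ ⟨L, _, hL1, hpos, htr, hy⟩ => ?_
    rw [hx, hy, EReal.coe_le_coe_iff]
    exact NCPoly.le_of_exists_cycEq hL1 hpos htr hdeg hτ
  · by_contra! hlt
    obtain ⟨τ, hsup, hinf⟩ := EReal.exists_between_coe_real hlt
    have hτ : ¬∃ σ ∈ SOHSdeg n d, cycEq (f - τ • 1) σ :=
      fun h => (le_sSup (by exact ⟨τ, h, rfl⟩)).not_gt hsup
    obtain ⟨L, hL, hL1, hLf⟩ := NCPoly.exists_lt_of_not_exists_cycEq hf hdeg hτ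
    refine (sInf_le ?_).not_gt ((EReal.coe_lt_coe_iff.2 hLf).trans hinf)
    exact ⟨L, fun p _ => hL.map_ncStar p, hL1, hL.nonneg, fun p q _ => hL.map_mul_comm p q, rfl⟩
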